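/- Let R be a commutative ring and let A = (a_{ij}), B = (b_{ij}), C = (c_{ij}) be infinite matrices with entries in R satisfying ∑_{j=0}^n a_{ij} b_{ℓ,n-j} = c_{i+ℓ,n} for all i, ℓ, n ≥ 0, with a_{00} and b_{00} invertible in R. If a_{0j} = 0 for all j > 0 and b_{0j} = 0 for all j > 0 (i.e., A and B are lower-triangular in row 0), then there exist invertible elements α, β ∈ R and a power series h ∈ R[[u]] such that the row-generating series satisfy A_i(u) = α h(u)^i, B_i(u) = β h(u)^i, and C_i(u) = αβ h(u)^i for all i ≥ 0. -/

import Mathlib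

/-!
Read the convolution identity as the product rule `Aᵢ(u) Bₗ(u) = C_{i+ℓ}(u)` for row series.
Triangularity makes `A₀ = α` and `B₀ = β` constants, so `C_ℓ = α Bₗ` and `Cᵢ = β Aᵢ`; with
`h := α⁻¹ A₁` the relation `Aᵢ B₁ = C_{i+1}` then gives `A_{i+1} = Aᵢ h` after cancelling the unit `β`.
-/

noncomputable section

open PowerSeries

/-- The `i`-th row-generating series `Mᵢ(u) = ∑_j m_{ij} uʲ ∈ R[[u]]` of an
infinite matrix `M = (m_{ij})_{i,j ≥ 0}` with entries in `R`. -/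
def rowGen {R : Type*} [CommRing R] (m : ℕ → ℕ → R) (i : ℕ) : PowerSeries R :=
  PowerSeries.mk (m i)

theorem exists_eq_mul_pow_of_mul_eq_add {M : Type*} [CommMonoid M] {A B C : ℕ → M}
    (hmul : ∀ i l, A i * B l = C (i + l)) (hA : IsUnit (A 0)) (hB : IsUnit (B 0)) :
    ∃ h : M, ∀ i, A i = A 0 * h ^ i ∧ B i = B 0 * h ^ i ∧ C i = A 0 * B 0 * h ^ i := by
  set h := ↑hA.unit⁻¹ * A 1
  have hCA : ∀ i, C i = B 0 * A i := fun i => ((mul_comm _ _).trans (hmul i 0)).symm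
  have hCB : ∀ l, C l = A 0 * B l := fun l => by simpa using (hmul 0 l).symm
  have hA1 : A 1 = A 0 * h := by rw [← mul_assoc, hA.mul_val_inv, one_mul]
  have hB1 : B 1 = B 0 * h := by
    refine hA.mul_left_cancel ?_
    rw [← hCB, hCA, hA1]
    ac_rfl
  have hApow : ∀ i, A i = A 0 * h ^ i := by
    intro i
    induction i with
    | zero => rw [pow_zero, mul_one]
    | succ i ih =>
      refine hB.mul_left_cancel ?_
      rw [← hCA, ← hmul, ih, hB1, pow_succ]
      ac_rfl
  refine ⟨h, fun i => ⟨hApow i, ?_, by rw [hCA, hApow]; ac_rfl⟩⟩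
  refine hA.mul_left_cancel ?_
  rw [← hCB, hCA, hApow]
  ac_rfl

section RowGen

variable {R : Type*} [CommRing R]

theorem rowGen_mul_rowGen {a b c : ℕ → ℕ → R}
    (hconv : ∀ i l n, ∑ j ∈ Finset.range (n + 1), a i j * b l (n - j) = c (i + l) n) (i l : ℕ) :
    rowGen a i * rowGen b l = rowGen c (i + l) := by
  ext n
  rw [coeff_mul, Finset.Nat.sum_antidiagonal_eq_sum_range_succ_mk]
  simpa only [rowGen, coeff_mk] using hconv i l n

theorem rowGen_eq_C_of_lower_triangular {m : ℕ → ℕ → R} {i : ℕ} (hm : ∀ j, 0 < j → m i j = 0) :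
    rowGen m i = C (m i 0) := by
  ext (_ | n)
  · simp [rowGen]
  · simp [rowGen, hm _ n.succ_pos]

end RowGen

/-- Let `R` be a commutative ring and `A, B, C` infinite
matrices over `R` satisfying `∑_{j=0}^n a_{ij} b_{ℓ,n-j} = c_{i+ℓ,n}` for all
`i, ℓ, n ≥ 0`, with `a₀₀`, `b₀₀` invertible.  If `A` and `B` are
lower-triangular in row `0` (i.e. `a_{0j} = 0` and `b_{0j} = 0` for `j > 0`),
then there exist invertible `α, β ∈ R` and `h ∈ R[[u]]` with `Aᵢ(u) = α·h(u)ⁱ`,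
`Bᵢ(u) = β·h(u)ⁱ` and `Cᵢ(u) = αβ·h(u)ⁱ` for all `i ≥ 0`. -/
theorem pascal_like_row0_triangular {R : Type*} [CommRing R] (a b c : ℕ → ℕ → R)
    (hconv : ∀ i l n, ∑ j ∈ Finset.range (n + 1), a i j * b l (n - j) = c (i + l) n)
    (ha00 : IsUnit (a 0 0)) (hb00 : IsUnit (b 0 0))
    (haRow0 : ∀ j, 0 < j → a 0 j = 0) (hbRow0 : ∀ j, 0 < j → b 0 j = 0) :
    ∃ (α β : R) (h : PowerSeries R),
      IsUnit α ∧ IsUnit β ∧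
      (∀ i, rowGen a i = PowerSeries.C α * h ^ i) ∧
      (∀ i, rowGen b i = PowerSeries.C β * h ^ i) ∧
      (∀ i, rowGen c i = PowerSeries.C (α * β) * h ^ i) := by
  have hA0 := rowGen_eq_C_of_lower_triangular haRow0
  have hB0 := rowGen_eq_C_of_lower_triangular hbRow0
  obtain ⟨h, hrows⟩ := exists_eq_mul_pow_of_mul_eq_add (rowGen_mul_rowGen hconv)
    (hA0 ▸ ha00.map C) (hB0 ▸ hb00.map C)
  refine ⟨a 0 0, b 0 0, h, ha00, hb00, fun i => ?_, fun i => ?_, fun i => ?_⟩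
  · rw [(hrows i).1, hA0]
  · rw [(hrows i).2.1, hB0]
  · rw [(hrows i).2.2, hA0, hB0, map_mul]
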